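/- The easy direction of Cheeger's inequality: for any weighted graph G and any vertex subset C with 0 < vol(C) ≤ vol(V)/2, φ(C) ≥ λ_2(L(G))/2; consequently the conductance Φ(G) = min over such C of φ(C) satisfies Φ(G) ≥ λ_2/2. -/

import Mathlib

/-!
The normalized Laplacian `L` is positive semidefinite and kills `D^{1/2} 1`. Put
`α = vol(C) / vol(V)` and test with `x = D^{1/2} g`, `g = 1_C - α`, which is orthogonal to
`D^{1/2} 1`: then `⟪L x, x⟫ = ½ ∑ A i j (g i - g j)² = cut(C)` and
`‖x‖² = vol(C) (1 - α) ≥ vol(C) / 2`, so it suffices that `λ₂ ‖x‖² ≤ ⟪L x, x⟫`.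
Expand `x` in an orthonormal eigenbasis of `L`. At most one eigenvalue lies below `λ₂`, and the
kernel vector `D^{1/2} 1` is a multiple of the corresponding eigenvector, so `x` has no component
along it.
-/

open Matrix Finset

/-- The normalized Laplacian `L(G) = I - D^{-1/2} A D^{-1/2}`. -/
noncomputable def normLap {n : ℕ} (A : Matrix (Fin n) (Fin n) ℝ) :
    Matrix (Fin n) (Fin n) ℝ :=
  1 - (Matrix.diagonal fun i => (Real.sqrt (∑ j, A i j))⁻¹) * A *
      (Matrix.diagonal fun i => (Real.sqrt (∑ j, A i j))⁻¹)

/-- `lam` is the nondecreasing enumeration of the eigenvalues (with multiplicity)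
of the matrix `M`. -/
def SortedEigs {n : ℕ} (M : Matrix (Fin n) (Fin n) ℝ) (lam : Fin n → ℝ) : Prop :=
  Monotone lam ∧ M.charpoly = ∏ i, (Polynomial.X - Polynomial.C (lam i))

open scoped RealInnerProductSpace

namespace LinearMap.IsSymmetric

variable {E : Type*} [NormedAddCommGroup E] [InnerProductSpace ℝ E] [FiniteDimensional ℝ E]
  {T : E →ₗ[ℝ] E} {n : ℕ} (hT : T.IsSymmetric) (hn : Module.finrank ℝ E = n)

theorem inner_map_self_eq_sum_eigenvalues_mul_sq (x : E) :
    ⟪T x, x⟫ = ∑ i, hT.eigenvalues hn i * ⟪hT.eigenvectorBasis hn i, x⟫ ^ 2 := by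
  rw [← (hT.eigenvectorBasis hn).sum_inner_mul_inner]
  refine sum_congr rfl fun i _ => ?_
  rw [hT, apply_eigenvectorBasis, real_inner_comm x]
  simp only [RCLike.ofReal_real_eq_id, id_eq, real_inner_smul_right]
  ring

theorem mul_norm_sq_le_inner_map_self {t : ℝ} {x : E}
    (hx : ∀ i, hT.eigenvalues hn i < t → ⟪hT.eigenvectorBasis hn i, x⟫ = 0) :
    t * ‖x‖ ^ 2 ≤ ⟪T x, x⟫ := by
  rw [hT.inner_map_self_eq_sum_eigenvalues_mul_sq hn,
    ← (hT.eigenvectorBasis hn).sum_sq_inner_right, mul_sum]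
  refine sum_le_sum fun i _ => ?_
  rcases lt_or_ge (hT.eigenvalues hn i) t with hi | hi
  · simp [hx i hi]
  · exact mul_le_mul_of_nonneg_right hi (sq_nonneg _)

theorem inner_eigenvectorBasis_eq_zero_of_apply_eq_zero {v : E} (hv : T v = 0) {i : Fin n}
    (hi : hT.eigenvalues hn i ≠ 0) : ⟪hT.eigenvectorBasis hn i, v⟫ = 0 := by
  have heig := hT.apply_eigenvectorBasis hn i
  simp only [RCLike.ofReal_real_eq_id, id_eq] at heig
  have h : hT.eigenvalues hn i * ⟪hT.eigenvectorBasis hn i, v⟫ = 0 := by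
    rw [← real_inner_smul_left, ← heig, hT, hv, inner_zero_right]
  exact (mul_eq_zero.mp h).resolve_left hi

open Polynomial in
theorem card_filter_eigenvalues_lt_le_one {lam : Fin n → ℝ} (hmono : Monotone lam)
    (hchar : T.charpoly = ∏ i, (X - C (lam i))) (h1 : 1 < n) :
    #{i | hT.eigenvalues hn i < lam ⟨1, h1⟩} ≤ 1 := by
  have hroots : univ.val.map (hT.eigenvalues hn) = univ.val.map lam := by
    have hlam : (∏ i, (X - C (lam i))).roots = univ.val.map lam := by
      rw [prod_eq_multiset_prod, ← roots_multiset_prod_X_sub_C (univ.val.map lam),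
        Multiset.map_map]
      rfl
    rw [← hlam, ← hchar, hT.roots_charpoly_eq_eigenvalues hn, RCLike.ofReal_real_eq_id,
      Function.id_comp]
  have hcount : #{i | hT.eigenvalues hn i < lam ⟨1, h1⟩} = #{i | lam i < lam ⟨1, h1⟩} := by
    have hμ := Multiset.countP_map (hT.eigenvalues hn) univ.val (· < lam ⟨1, h1⟩)
    rw [hroots, Multiset.countP_map] at hμ
    simpa [card_def] using hμ.symm
  rw [hcount, card_le_one]
  intro i hi j hj
  have hi0 := hmono.reflect_lt (mem_filter.mp hi).2
  have hj0 := hmono.reflect_lt (mem_filter.mp hj).2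
  rw [Fin.lt_def] at hi0 hj0
  exact Fin.ext (by simp only at hi0 hj0; omega)

end LinearMap.IsSymmetric

theorem LinearMap.IsPositive.mul_norm_sq_le_inner_map_self_of_inner_eq_zero
    {E : Type*} [NormedAddCommGroup E] [InnerProductSpace ℝ E] [FiniteDimensional ℝ E]
    {T : E →ₗ[ℝ] E} (hT : T.IsPositive) {n : ℕ} (hn : Module.finrank ℝ E = n) {t : ℝ}
    (ht : #{i | hT.isSymmetric.eigenvalues hn i < t} ≤ 1) {v : E} (hv0 : v ≠ 0) (hv : T v = 0)
    {x : E} (hxv : ⟪x, v⟫ = 0) : t * ‖x‖ ^ 2 ≤ ⟪T x, x⟫ := by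
  set b := hT.isSymmetric.eigenvectorBasis hn
  refine hT.isSymmetric.mul_norm_sq_le_inner_map_self hn fun i hi => ?_
  -- `v` only has components along eigenvectors of eigenvalue `0 ≤ μ i < t`, and by `ht`
  -- the only such eigenvector is `b i`.
  have hsupp : ∀ j ≠ i, ⟪b j, v⟫ = 0 := by
    intro j hji
    by_contra hj
    have hμj : hT.isSymmetric.eigenvalues hn j = 0 := by
      by_contra h
      exact hj (hT.isSymmetric.inner_eigenvectorBasis_eq_zero_of_apply_eq_zero hn hv h)
    have hjt : hT.isSymmetric.eigenvalues hn j < t :=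
      hμj ▸ (hT.nonneg_eigenvalues hn i).trans_lt hi
    exact hji (card_le_one.mp ht j (by simpa using hjt) i (by simpa using hi))
  have hvi : ⟪b i, v⟫ ≠ 0 := by
    intro h
    apply hv0
    rw [← b.sum_repr' v]
    refine sum_eq_zero fun j _ => ?_
    rcases eq_or_ne j i with rfl | hji
    · rw [h, zero_smul]
    · rw [hsupp j hji, zero_smul]
  have hxv' : ⟪x, b i⟫ * ⟪b i, v⟫ = 0 := by
    rw [← hxv, ← b.sum_inner_mul_inner x v,
      sum_eq_single i (fun j _ hji => by rw [hsupp j hji, mul_zero]) (by simp)]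
  rw [real_inner_comm]
  exact (mul_eq_zero.mp hxv').resolve_right hvi

theorem Matrix.charpoly_toEuclideanLin {𝕜 ι : Type*} [RCLike 𝕜] [Fintype ι] [DecidableEq ι]
    (M : Matrix ι ι 𝕜) : (toEuclideanLin M).charpoly = M.charpoly := by
  rw [toEuclideanLin_eq_toLin_orthonormal, charpoly_toLin]

theorem Matrix.PosSemidef.mul_dotProduct_self_le_of_dotProduct_eq_zero {n : ℕ}
    {M : Matrix (Fin n) (Fin n) ℝ} (hM : M.PosSemidef) {lam : Fin n → ℝ}
    (hlam : SortedEigs M lam) (h1 : 1 < n) {v : Fin n → ℝ} (hv0 : v ≠ 0) (hv : M *ᵥ v = 0)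
    {x : Fin n → ℝ} (hxv : x ⬝ᵥ v = 0) : lam ⟨1, h1⟩ * (x ⬝ᵥ x) ≤ x ⬝ᵥ M *ᵥ x := by
  have hT := isPositive_toEuclideanLin_iff.mpr hM
  have hn := finrank_euclideanSpace_fin (𝕜 := ℝ) (n := n)
  have hinner (y z : Fin n → ℝ) : ⟪WithLp.toLp 2 y, WithLp.toLp 2 z⟫ = y ⬝ᵥ z := by
    rw [EuclideanSpace.inner_toLp_toLp, star_trivial, dotProduct_comm]
  have := hT.mul_norm_sq_le_inner_map_self_of_inner_eq_zero hn
    (hT.isSymmetric.card_filter_eigenvalues_lt_le_one hn hlam.1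
      (by rw [charpoly_toEuclideanLin, hlam.2]) h1)
    (v := WithLp.toLp 2 v) (by simpa using hv0) (by simp [hv]) (x := WithLp.toLp 2 x)
    (by rw [hinner, hxv])
  rwa [← real_inner_self_eq_norm_sq, toLpLin_toLp, hinner, hinner, toLin'_apply,
    dotProduct_comm (M *ᵥ x)] at this

theorem Matrix.IsSymm.sum_sum_mul_mul_sub_eq_half {ι : Type*} [Fintype ι] {A : Matrix ι ι ℝ}
    (hA : A.IsSymm) (g : ι → ℝ) :
    ∑ i, ∑ j, A i j * (g i * (g i - g j)) = (∑ i, ∑ j, A i j * (g i - g j) ^ 2) / 2 := by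
  have hswap : ∑ i, ∑ j, A i j * (g i * (g i - g j)) = ∑ i, ∑ j, A i j * (g j * (g j - g i)) := by
    rw [sum_comm]
    simp only [hA.apply]
  rw [eq_div_iff two_ne_zero, mul_two]
  nth_rewrite 2 [hswap]
  simp only [← sum_add_distrib]
  exact sum_congr rfl fun i _ => sum_congr rfl fun j _ => by ring

theorem Matrix.IsSymm.sum_sum_mul_indicator_sub_sq {ι : Type*} [Fintype ι] [DecidableEq ι]
    {A : Matrix ι ι ℝ} (hA : A.IsSymm) (C : Finset ι) :
    ∑ i, ∑ j, A i j * ((if i ∈ C then 1 else 0) - (if j ∈ C then 1 else 0)) ^ 2 =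
      2 * ∑ a ∈ C, ∑ b ∈ Cᶜ, A a b := by
  have hterm (i j : ι) : A i j * ((if i ∈ C then 1 else 0) - (if j ∈ C then 1 else 0)) ^ 2 =
      (if i ∈ C then if j ∈ Cᶜ then A i j else 0 else 0) +
        (if j ∈ C then if i ∈ Cᶜ then A j i else 0 else 0) := by
    by_cases hi : i ∈ C <;> by_cases hj : j ∈ C <;> simp [hi, hj, hA.apply]
  simp only [hterm, sum_add_distrib]
  rw [sum_comm (f := fun i j => if j ∈ C then _ else _)]
  simp only [sum_ite_irrel, sum_const_zero, sum_ite_mem, univ_inter, two_mul]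

theorem dotProduct_sqrt_mul_sqrt_mul {ι : Type*} [Fintype ι] {w : ι → ℝ} (hw : 0 ≤ w)
    (g h : ι → ℝ) :
    (fun i => √(w i) * g i) ⬝ᵥ (fun i => √(w i) * h i) = ∑ i, w i * (g i * h i) := by
  refine sum_congr rfl fun i _ => ?_
  rw [← Real.mul_self_sqrt (hw i)]
  ring

section CenteredIndicator

variable {ι : Type*} [Fintype ι] [DecidableEq ι] (w : ι → ℝ) (C : Finset ι)

noncomputable def centeredIndicator (i : ι) : ℝ :=
  (if i ∈ C then 1 else 0) - (∑ a ∈ C, w a) / ∑ a, w a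

theorem centeredIndicator_sub_centeredIndicator (i j : ι) :
    centeredIndicator w C i - centeredIndicator w C j =
      (if i ∈ C then 1 else 0) - (if j ∈ C then 1 else 0) := by
  simp only [centeredIndicator]
  ring

variable {w}

theorem sum_mul_centeredIndicator (hw : ∑ a, w a ≠ 0) :
    ∑ i, w i * centeredIndicator w C i = 0 := by
  simp only [centeredIndicator, mul_sub, mul_ite, mul_one, mul_zero, sum_sub_distrib,
    sum_ite_mem, univ_inter, ← sum_mul]
  rw [mul_div_cancel₀ _ hw, sub_self]

theorem sum_mul_centeredIndicator_mul_self (hw : ∑ a, w a ≠ 0) :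
    ∑ i, w i * (centeredIndicator w C i * centeredIndicator w C i) =
      (∑ a ∈ C, w a) * (1 - (∑ a ∈ C, w a) / ∑ a, w a) := by
  set α := (∑ a ∈ C, w a) / ∑ a, w a
  have hsq (i : ι) : w i * (centeredIndicator w C i * centeredIndicator w C i) =
      (if i ∈ C then w i else 0) * (1 - α) - α * (w i * centeredIndicator w C i) := by
    simp only [centeredIndicator]
    split_ifs <;> ring
  simp only [hsq, sum_sub_distrib, ← sum_mul, ← mul_sum, sum_mul_centeredIndicator C hw,
    sum_ite_mem, univ_inter, mul_zero, sub_zero]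

end CenteredIndicator

section NormalizedLaplacian

variable {n : ℕ} {A : Matrix (Fin n) (Fin n) ℝ}

theorem normLap_isSymm (hA : A.IsSymm) : (normLap A).IsSymm := by
  simp only [normLap, IsSymm, transpose_sub, transpose_one, transpose_mul, diagonal_transpose,
    hA.eq, Matrix.mul_assoc]

theorem normLap_mulVec_sqrt_mul (hdeg : ∀ i, 0 < ∑ j, A i j) (g : Fin n → ℝ) :
    normLap A *ᵥ (fun i => √(∑ j, A i j) * g i) =
      fun i => (√(∑ j, A i j))⁻¹ * ∑ j, A i j * (g i - g j) := by
  have hs (k : Fin n) : √(∑ j, A k j) ≠ 0 := (Real.sqrt_pos.mpr (hdeg k)).ne'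
  have hDg : (diagonal fun i => (√(∑ j, A i j))⁻¹) *ᵥ (fun i => √(∑ j, A i j) * g i) = g := by
    ext i
    rw [mulVec_diagonal, inv_mul_cancel_left₀ (hs i)]
  rw [normLap, sub_mulVec, one_mulVec, ← mulVec_mulVec, ← mulVec_mulVec, hDg]
  ext i
  rw [Pi.sub_apply, mulVec_diagonal, mulVec, dotProduct]
  simp only [mul_sub, sum_sub_distrib, ← sum_mul]
  congr 1
  rw [eq_inv_mul_iff_mul_eq₀ (hs i), ← mul_assoc, Real.mul_self_sqrt (hdeg i).le]

theorem normLap_mulVec_sqrt_deg (hdeg : ∀ i, 0 < ∑ j, A i j) :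
    normLap A *ᵥ (fun i => √(∑ j, A i j)) = 0 := by
  simpa [Pi.zero_def] using normLap_mulVec_sqrt_mul hdeg 1

theorem dotProduct_normLap_mulVec_sqrt_mul (hA : A.IsSymm) (hdeg : ∀ i, 0 < ∑ j, A i j)
    (g : Fin n → ℝ) :
    (fun i => √(∑ j, A i j) * g i) ⬝ᵥ normLap A *ᵥ (fun i => √(∑ j, A i j) * g i) =
      (∑ i, ∑ j, A i j * (g i - g j) ^ 2) / 2 := by
  rw [normLap_mulVec_sqrt_mul hdeg, ← hA.sum_sum_mul_mul_sub_eq_half g, dotProduct]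
  refine sum_congr rfl fun i _ => ?_
  rw [mul_comm (√_), mul_assoc, mul_inv_cancel_left₀ (Real.sqrt_pos.mpr (hdeg i)).ne', mul_sum]
  exact sum_congr rfl fun j _ => by ring

theorem normLap_posSemidef (hA : A.IsSymm) (hA0 : ∀ i j, 0 ≤ A i j)
    (hdeg : ∀ i, 0 < ∑ j, A i j) : (normLap A).PosSemidef := by
  refine .of_dotProduct_mulVec_nonneg (isHermitian_iff_isSymm.mpr (normLap_isSymm hA)) fun x => ?_
  have hx : x = fun i => √(∑ j, A i j) * (x i / √(∑ j, A i j)) :=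
    funext fun i => (mul_div_cancel₀ _ (Real.sqrt_pos.mpr (hdeg i)).ne').symm
  rw [star_trivial, hx, dotProduct_normLap_mulVec_sqrt_mul hA hdeg]
  exact div_nonneg (sum_nonneg fun i _ => sum_nonneg fun j _ =>
    mul_nonneg (hA0 i j) (sq_nonneg _)) zero_le_two

end NormalizedLaplacian

theorem cheeger_easy_direction_general {n : ℕ} (hn : 1 < n)
    (A : Matrix (Fin n) (Fin n) ℝ)
    (hA : A.IsSymm) (hA0 : ∀ i j, 0 ≤ A i j) (hdeg : ∀ i, 0 < ∑ j, A i j)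
    (lam : Fin n → ℝ) (hlam : SortedEigs (normLap A) lam) :
    ∀ C : Finset (Fin n), 0 < ∑ a ∈ C, ∑ b, A a b →
      (∑ a ∈ C, ∑ b, A a b) ≤ (∑ a, ∑ b, A a b) / 2 →
      lam ⟨1, hn⟩ / 2 ≤ (∑ a ∈ C, ∑ b ∈ Cᶜ, A a b) / (∑ a ∈ C, ∑ b, A a b) := by
  intro C hvolC hhalf
  have hw : (0 : Fin n → ℝ) ≤ fun i => ∑ j, A i j := fun i => (hdeg i).le
  have hvolV : 0 < ∑ a, ∑ b, A a b := sum_pos (fun i _ => hdeg i) ⟨⟨0, by omega⟩, mem_univ _⟩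
  set g := centeredIndicator (fun i => ∑ j, A i j) C
  have horth : (fun i => √(∑ j, A i j) * g i) ⬝ᵥ (fun i => √(∑ j, A i j)) = 0 := by
    have h := dotProduct_sqrt_mul_sqrt_mul hw g 1
    simp only [Pi.one_apply, mul_one] at h
    rw [h, sum_mul_centeredIndicator C hvolV.ne']
  have key := (normLap_posSemidef hA hA0 hdeg).mul_dotProduct_self_le_of_dotProduct_eq_zero hlam
    hn (Function.ne_iff.mpr ⟨⟨0, by omega⟩, (Real.sqrt_pos.mpr (hdeg _)).ne'⟩)
    (normLap_mulVec_sqrt_deg hdeg) horth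
  rw [dotProduct_normLap_mulVec_sqrt_mul hA hdeg, dotProduct_sqrt_mul_sqrt_mul hw,
    sum_mul_centeredIndicator_mul_self C hvolV.ne'] at key
  simp only [g, centeredIndicator_sub_centeredIndicator, hA.sum_sum_mul_indicator_sub_sq] at key
  have hαle : (∑ a ∈ C, ∑ b, A a b) / (∑ a, ∑ b, A a b) ≤ 1 / 2 := by
    rw [div_le_iff₀ hvolV]; linarith
  have hcut : 0 ≤ ∑ a ∈ C, ∑ b ∈ Cᶜ, A a b := sum_nonneg fun a _ => sum_nonneg fun b _ => hA0 a b
  rw [div_le_div_iff₀ two_pos hvolC]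
  rcases le_or_gt (lam ⟨1, hn⟩) 0 with hl | hl <;> nlinarith

/-- The easy direction of Cheeger's inequality: for a connected weighted graph and any
vertex subset `C` with `0 < vol(C) ≤ vol(V)/2`, the normalized cut satisfies
`φ(C) ≥ λ₂/2`; consequently the conductance `Φ(G) = min φ(C)` satisfies
`Φ(G) ≥ λ₂/2`. -/
theorem cheeger_easy_direction {n : ℕ} (hn : 1 < n)
    (A : Matrix (Fin n) (Fin n) ℝ)
    (hA : A.IsSymm) (hA0 : ∀ i j, 0 ≤ A i j) (hdeg : ∀ i, 0 < ∑ j, A i j)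
    (hconn : (SimpleGraph.fromRel fun a b => 0 < A a b).Connected)
    (lam : Fin n → ℝ) (hlam : SortedEigs (normLap A) lam) :
    ∀ C : Finset (Fin n), 0 < ∑ a ∈ C, ∑ b, A a b →
      (∑ a ∈ C, ∑ b, A a b) ≤ (∑ a, ∑ b, A a b) / 2 →
      lam ⟨1, hn⟩ / 2 ≤ (∑ a ∈ C, ∑ b ∈ Cᶜ, A a b) / (∑ a ∈ C, ∑ b, A a b) :=
  cheeger_easy_direction_general hn A hA hA0 hdeg lam hlam
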